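/- arXiv:2002.00587 — 2 statements merged into one kernel-verified Lean document; each statement's English description precedes it below -/
import Mathlib

section
/- Let m ≥ 0 and p ≥ 1, and let g : ℝ → ℝ be a polynomial function of order m. Then the function G_p(x) = x^p g(x) is a polynomial function of order m + p; in particular, x ↦ x g(x) is a polynomial function of order m + 1. -/
/-!
Iterating the product rule `Δ_h (x g)(x) = x Δ_h g(x) + h g(x + h)` gives
`Δ_h^{n+1} (x g)(x) = x Δ_h^{n+1} g(x) + (n + 1) h Δ_h^n g(x + h)`, so multiplying by `x`
raises the order of a polynomial function by one; induction on `p` does the rest.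
-/

/-- The simple difference operator `Δ_h f (x) = f (x + h) - f x`. -/
def simpleDiff (h : ℝ) (f : ℝ → ℝ) : ℝ → ℝ := fun x => f (x + h) - f x

/-- `f` is a polynomial function of order `m` if `Δ_h^{m+1} f = 0` for every `h`. -/
def IsPolynomialFunction (m : ℕ) (f : ℝ → ℝ) : Prop :=
  ∀ x h : ℝ, (simpleDiff h)^[m + 1] f x = 0

lemma simpleDiff_iterate_succ_apply (h : ℝ) (f : ℝ → ℝ) (n : ℕ) (x : ℝ) :
    (simpleDiff h)^[n + 1] f x = (simpleDiff h)^[n] f (x + h) - (simpleDiff h)^[n] f x := by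
  rw [Function.iterate_succ_apply']
  rfl

lemma simpleDiff_iterate_succ_id_mul (h : ℝ) (g : ℝ → ℝ) (n : ℕ) (x : ℝ) :
    (simpleDiff h)^[n + 1] (fun y => y * g y) x
      = x * (simpleDiff h)^[n + 1] g x + (n + 1) * h * (simpleDiff h)^[n] g (x + h) := by
  induction n generalizing x with
  | zero =>
    simp only [zero_add, Function.iterate_one, Function.iterate_zero_apply, simpleDiff]
    ring
  | succ n ih =>
    rw [simpleDiff_iterate_succ_apply, ih, ih, simpleDiff_iterate_succ_apply h g (n + 1),
      simpleDiff_iterate_succ_apply h g n (x + h)]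
    push_cast
    ring

lemma IsPolynomialFunction.succ {m : ℕ} {g : ℝ → ℝ} (hg : IsPolynomialFunction m g) :
    IsPolynomialFunction (m + 1) g := by
  intro x h
  rw [simpleDiff_iterate_succ_apply, hg, hg, sub_zero]

lemma IsPolynomialFunction.id_mul {m : ℕ} {g : ℝ → ℝ} (hg : IsPolynomialFunction m g) :
    IsPolynomialFunction (m + 1) (fun x => x * g x) := by
  intro x h
  rw [simpleDiff_iterate_succ_id_mul, hg.succ, hg]
  ring

lemma IsPolynomialFunction.pow_mul {m : ℕ} {g : ℝ → ℝ} (hg : IsPolynomialFunction m g)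
    (p : ℕ) : IsPolynomialFunction (m + p) (fun x => x ^ p * g x) := by
  induction p with
  | zero => simpa only [pow_zero, one_mul, add_zero] using hg
  | succ p ih =>
    have hmul : (fun x : ℝ => x ^ (p + 1) * g x) = fun x => x * (x ^ p * g x) := by
      funext x
      ring
    rw [hmul, ← add_assoc]
    exact ih.id_mul

theorem polynomialFunction_mul_pow_general (m p : ℕ)
    (g : ℝ → ℝ) (hg : IsPolynomialFunction m g) :
    IsPolynomialFunction (m + p) (fun x => x ^ p * g x) ∧
    IsPolynomialFunction (m + 1) (fun x => x * g x) :=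
  ⟨hg.pow_mul p, hg.id_mul⟩

/-- From the proof of Lemma 3.2: if `g` is a polynomial function of order `m`, then
`x ↦ x^p * g x` is a polynomial function of order `m + p`; in particular `x ↦ x * g x`
is a polynomial function of order `m + 1`. -/
theorem polynomialFunction_mul_pow (m p : ℕ) (hp : 1 ≤ p)
    (g : ℝ → ℝ) (hg : IsPolynomialFunction m g) :
    IsPolynomialFunction (m + p) (fun x => x ^ p * g x) ∧
    IsPolynomialFunction (m + 1) (fun x => x * g x) :=
  polynomialFunction_mul_pow_general m p g hg
end

section
/- Let n ≥ 1 and k ≥ 1, let a¹, …, aᵏ be vectors in ℝⁿ, and let H₁, …, H_k : ℝ → ℝ be polynomial functions of order k−1. If the function F(x) = Σ_{i=1}^{k} H_i(aⁱ·x) is continuous on ℝⁿ, then F coincides on all of ℝⁿ with a polynomial of degree at most k−1. -/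
/-!
Along a line `t ↦ x + t • y` every ridge term `H i (a i ⬝ᵥ x + t * a i ⬝ᵥ y)` is again a
polynomial function of order `k - 1`, so the restriction of the sum is a continuous polynomial
function of one variable. On an arithmetic grid such a function agrees with the polynomial
interpolating it at `k` consecutive nodes, because a vanishing `k`-th difference propagates
zeros along the grid; the grids with steps `1 / b` all contain `ℕ`, so these polynomials coincide
and the function is a polynomial on `ℚ`, hence everywhere by continuity (Fréchet).

A function on `Kⁿ` that is a polynomial of degree `≤ m` along every line is a polynomial:
interpolating in the first coordinate at `0, …, m` with the slices as coefficients gives one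
by induction on `n`, and its homogeneous components of degree `> m` vanish, being coefficients
of its restrictions to lines through the origin.
-/

open Polynomial

lemma Polynomial.natDegree_le_iff_degree_lt_add_one {R : Type*} [Semiring R] {p : R[X]} {m : ℕ} :
    p.natDegree ≤ m ↔ p.degree < ↑(m + 1) := by
  rw [natDegree_le_iff_coeff_eq_zero, degree_lt_iff_coeff_zero]
  rfl

lemma fwdDiff_iter_comp_affine {R G : Type*} [CommRing R] [AddCommGroup G] (u : R → G)
    (c d s : R) (m : ℕ) (x : R) :
    (fwdDiff s)^[m] (fun t => u (c + t * d)) x = (fwdDiff (s * d))^[m] u (c + x * d) := by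
  simp only [fwdDiff_iter_eq_sum_shift, nsmul_eq_mul]
  congr! 3
  ring

lemma apply_add_nsmul_eq_zero_of_fwdDiff_iter_eq_zero {M G : Type*} [AddCommMonoid M]
    [AddCommGroup G] {φ : M → G} {s x₀ : M} {m : ℕ} (hφ : (fwdDiff s)^[m + 1] φ = 0)
    (h₀ : ∀ i ≤ m, φ (x₀ + i • s) = 0) (j : ℕ) : φ (x₀ + j • s) = 0 := by
  rw [shift_eq_sum_fwdDiff_iter s φ j x₀]
  refine Finset.sum_eq_zero fun i _ => ?_
  rcases le_or_gt i m with him | hmi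
  · rw [fwdDiff_iter_eq_sum_shift]
    refine smul_eq_zero_of_right _ (Finset.sum_eq_zero fun l hl => ?_)
    rw [h₀ l (by have := Finset.mem_range.1 hl; omega), smul_zero]
  · obtain ⟨r, rfl⟩ := Nat.exists_eq_add_of_lt hmi
    rw [show m + r + 1 = r + (m + 1) by ring, Function.iterate_add_apply, hφ,
      Function.iterate_fixed (x := 0) (fwdDiff_const s 0), Pi.zero_apply, smul_zero]

lemma isPolynomialFunction_iff_fwdDiff {m : ℕ} {f : ℝ → ℝ} :
    IsPolynomialFunction m f ↔ ∀ h x, (fwdDiff h)^[m + 1] f x = 0 :=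
  forall_comm

namespace IsPolynomialFunction

variable {m : ℕ} {f g : ℝ → ℝ}

lemma comp_affine (hf : IsPolynomialFunction m f) (c d : ℝ) :
    IsPolynomialFunction m (fun t => f (c + t * d)) := by
  rw [isPolynomialFunction_iff_fwdDiff] at *
  intro s x
  rw [fwdDiff_iter_comp_affine, hf]

lemma sub (hf : IsPolynomialFunction m f) (hg : IsPolynomialFunction m g) :
    IsPolynomialFunction m (f - g) := by
  rw [isPolynomialFunction_iff_fwdDiff] at *
  intro s x
  rw [sub_eq_add_neg, ← neg_one_smul ℝ g, fwdDiff_iter_add, fwdDiff_iter_const_smul,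
    Pi.add_apply, Pi.smul_apply, hf, hg, smul_zero, add_zero]

lemma finsetSum {ι : Type*} (s : Finset ι) {f : ι → ℝ → ℝ}
    (hf : ∀ i ∈ s, IsPolynomialFunction m (f i)) : IsPolynomialFunction m (∑ i ∈ s, f i) := by
  simp only [isPolynomialFunction_iff_fwdDiff] at *
  intro h x
  rw [fwdDiff_iter_finsetSum, Finset.sum_apply]
  exact Finset.sum_eq_zero fun i hi => hf i hi h x

end IsPolynomialFunction

lemma Polynomial.isPolynomialFunction_eval {m : ℕ} {p : ℝ[X]} (hp : p.natDegree ≤ m) :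
    IsPolynomialFunction m p.eval := by
  rw [isPolynomialFunction_iff_fwdDiff]
  intro h x
  rcases eq_or_ne h 0 with rfl | hh
  · have hzero : fwdDiff 0 p.eval = 0 := by ext; simp [fwdDiff]
    rw [Function.iterate_succ_apply, hzero, Function.iterate_fixed (x := 0) (fwdDiff_const 0 0)]
    rfl
  -- for step `1` this is `fwdDiff_iter_eq_zero_of_degree_lt`; rescale `p` to reduce to it
  have hrescale : (p.comp (C h * X)).eval = fun t => p.eval (0 + t * h) := by
    funext t; rw [eval_comp, eval_mul, eval_C, eval_X, zero_add, mul_comm]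
  have hdeg : (p.comp (C h * X)).natDegree < m + 1 := by
    refine natDegree_comp_le.trans_lt (Nat.lt_succ_of_le ?_)
    rw [natDegree_C_mul_X h hh, mul_one]
    exact hp
  have := congr_fun (fwdDiff_iter_eq_zero_of_degree_lt hdeg) (x / h)
  rwa [hrescale, fwdDiff_iter_comp_affine p.eval, one_mul, zero_add, div_mul_cancel₀ x hh] at this

namespace IsPolynomialFunction

variable {m : ℕ} {g : ℝ → ℝ}

lemma exists_polynomial_eq_on_grid (hg : IsPolynomialFunction m g) (x₀ : ℝ) {s : ℝ}
    (hs : s ≠ 0) :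
    ∃ q : ℝ[X], q.natDegree ≤ m ∧ ∀ j : ℕ, g (x₀ + j * s) = q.eval (x₀ + j * s) := by
  set v : ℕ → ℝ := fun i => x₀ + i * s
  have hv : Set.InjOn v (Finset.range (m + 1)) := fun i _ j _ hij => by
    simpa [v, hs] using hij
  set q := Lagrange.interpolate (Finset.range (m + 1)) v (fun i => g (v i))
  have hq : q.natDegree ≤ m := by
    have := Lagrange.degree_interpolate_lt (fun i => g (v i)) hv
    rwa [Finset.card_range, ← natDegree_le_iff_degree_lt_add_one] at this
  refine ⟨q, hq, fun j => sub_eq_zero.1 ?_⟩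
  have hdiff := isPolynomialFunction_iff_fwdDiff.1 (hg.sub (isPolynomialFunction_eval hq)) s
  have hnodes : ∀ i ≤ m, (g - q.eval) (x₀ + i • s) = 0 := fun i hi => by
    rw [nsmul_eq_mul, Pi.sub_apply, sub_eq_zero]
    exact (Lagrange.eval_interpolate_at_node (fun i => g (v i)) hv
      (Finset.mem_range.2 (Nat.lt_succ_of_le hi))).symm
  simpa [nsmul_eq_mul] using
    apply_add_nsmul_eq_zero_of_fwdDiff_iter_eq_zero (funext hdiff) hnodes j

theorem exists_polynomial_of_continuous (hg : IsPolynomialFunction m g) (hc : Continuous g) :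
    ∃ p : ℝ[X], p.natDegree ≤ m ∧ g = p.eval := by
  obtain ⟨p, hpm, hp⟩ := hg.exists_polynomial_eq_on_grid 0 one_ne_zero
  refine ⟨p, hpm, Continuous.ext_on Rat.denseRange_cast hc p.continuous ?_⟩
  rintro _ ⟨r, rfl⟩
  -- the grid `-N + ℕ / den` contains `r` and every natural number
  set N := r.num.natAbs
  have hden : (r.den : ℝ) ≠ 0 := Nat.cast_ne_zero.2 r.den_ne_zero
  obtain ⟨q, -, hq⟩ := hg.exists_polynomial_eq_on_grid (-N) (inv_ne_zero hden)
  have hnat (i : ℕ) : (i : ℝ) = -N + ((N + i) * r.den : ℕ) * (r.den : ℝ)⁻¹ := by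
    push_cast; field_simp; ring
  have hqp : q = p := by
    refine eq_of_infinite_eval_eq q p
      (Set.infinite_of_injective_forall_mem Nat.cast_injective fun i => ?_)
    rw [Set.mem_ofPred_eq, hnat i, ← hq, ← hnat i]
    simpa using hp i
  obtain ⟨j, hj⟩ := Int.eq_ofNat_of_zero_le (a := N * r.den + r.num) (by
    have : (r.num.natAbs : ℤ) ≤ N * r.den := by
      exact_mod_cast Nat.le_mul_of_pos_right _ r.den_pos
    omega)
  have hr : (r : ℝ) = -N + j * (r.den : ℝ)⁻¹ := by
    have hj' : (j : ℝ) = N * r.den + r.num := by exact_mod_cast hj.symm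
    rw [hj', Rat.cast_def]; field_simp; ring
  rw [hr, hq, hqp]

end IsPolynomialFunction

lemma Polynomial.eval_eq_sum_eval_natCast_mul_basis {K : Type*} [Field K] [CharZero K] {m : ℕ}
    {p : K[X]} (hp : p.natDegree ≤ m) (t : K) :
    p.eval t = ∑ i ∈ Finset.range (m + 1),
      p.eval (i : K) * (Lagrange.basis (Finset.range (m + 1)) Nat.cast i).eval t := by
  have hinj : Set.InjOn (Nat.cast : ℕ → K) (Finset.range (m + 1)) := Nat.cast_injective.injOn
  rw [natDegree_le_iff_degree_lt_add_one, ← Finset.card_range (m + 1)] at hp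
  conv_lhs => rw [Lagrange.eq_interpolate hinj hp]
  simp [Lagrange.interpolate_apply, eval_finsetSum]

namespace MvPolynomial

lemma IsHomogeneous.eval_smul {R σ : Type*} [CommSemiring R] {p : MvPolynomial σ R} {d : ℕ}
    (hp : p.IsHomogeneous d) (t : R) (y : σ → R) :
    eval (t • y) p = t ^ d * eval y p := by
  rw [eval_eq, eval_eq, Finset.mul_sum]
  refine Finset.sum_congr rfl fun e he => ?_
  have hdeg : ∑ i ∈ e.support, e i = d := by
    simpa [Finsupp.weight_apply, Finsupp.sum] using hp (mem_support_iff.1 he)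
  simp only [Pi.smul_apply, smul_eq_mul, mul_pow, Finset.prod_mul_distrib,
    Finset.prod_pow_eq_pow_sum, hdeg]
  ring

lemma eval_smul_eq_sum_homogeneousComponent {R σ : Type*} [CommSemiring R]
    (P : MvPolynomial σ R) (t : R) (y : σ → R) :
    eval (t • y) P = ∑ d ∈ Finset.range (P.totalDegree + 1),
      eval y (homogeneousComponent d P) * t ^ d := by
  conv_lhs => rw [← sum_homogeneousComponent P]
  rw [map_sum]
  exact Finset.sum_congr rfl fun d _ =>
    ((homogeneousComponent_isHomogeneous d P).eval_smul t y).trans (mul_comm _ _)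

theorem totalDegree_le_of_forall_eval_smul {R σ : Type*} [CommRing R] [IsDomain R] [Infinite R]
    {P : MvPolynomial σ R} {m : ℕ}
    (h : ∀ y : σ → R, ∃ q : R[X], q.natDegree ≤ m ∧ ∀ t, eval (t • y) P = q.eval t) :
    P.totalDegree ≤ m := by
  have hzero (d : ℕ) (hd : m < d) : homogeneousComponent d P = 0 := by
    refine MvPolynomial.funext fun y => ?_
    obtain ⟨q, hqm, hq⟩ := h y
    -- `t ↦ eval (t • y) P` has the values of the homogeneous components as coefficients
    have hcoeff : ∑ e ∈ Finset.range (P.totalDegree + 1),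
        Polynomial.C (eval y (homogeneousComponent e P)) * Polynomial.X ^ e = q :=
      Polynomial.funext fun t => by
        simp [Polynomial.eval_finsetSum, ← hq, eval_smul_eq_sum_homogeneousComponent]
    have := congr_arg (Polynomial.coeff · d) hcoeff
    simp only [Polynomial.finsetSum_coeff, Polynomial.coeff_C_mul_X_pow,
      Polynomial.coeff_eq_zero_of_natDegree_lt (hqm.trans_lt hd)] at this
    rw [Finset.sum_ite_eq] at this
    split_ifs at this with hdP
    · simpa using this
    · simp [homogeneousComponent_eq_zero d P (by simpa using hdP)]
  rw [← sum_homogeneousComponent P]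
  refine (totalDegree_finsetSum _ _).trans (Finset.sup_le fun d _ => ?_)
  rcases le_or_gt d m with hdm | hdm
  · exact (homogeneousComponent_isHomogeneous d P).totalDegree_le.trans hdm
  · simp [hzero d hdm]

variable {K : Type*} [Field K] [CharZero K]

theorem exists_eq_eval_of_forall_update {n m : ℕ} {f : (Fin n → K) → K}
    (hf : ∀ x j, ∃ p : K[X], p.natDegree ≤ m ∧ ∀ t, f (Function.update x j t) = p.eval t) :
    ∃ Q : MvPolynomial (Fin n) K, ∀ x, f x = eval x Q := by
  induction n with
  | zero => exact ⟨C (f 0), fun x => by simp [Subsingleton.elim x 0]⟩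
  | succ n ih =>
    have hslice (i : ℕ) : ∃ Q : MvPolynomial (Fin n) K, ∀ y, f (Fin.cons (i : K) y) = eval y Q :=
      ih fun y j => by simpa only [Fin.cons_update] using hf (Fin.cons (i : K) y) j.succ
    choose Q hQ using hslice
    set b := Lagrange.basis (Finset.range (m + 1)) (Nat.cast : ℕ → K)
    -- Lagrange interpolation in the first coordinate, with the slices as coefficients
    refine ⟨∑ i ∈ Finset.range (m + 1), (b i).toMvPolynomial 0 * rename Fin.succ (Q i),
      fun x => ?_⟩
    obtain ⟨t, y, rfl⟩ : ∃ t y, x = Fin.cons t y := ⟨x 0, Fin.tail x, (Fin.cons_self_tail x).symm⟩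
    obtain ⟨p, hpm, hp⟩ := hf (Fin.cons t y) 0
    simp only [Fin.update_cons_zero] at hp
    rw [hp, eval_eq_sum_eval_natCast_mul_basis hpm, map_sum]
    refine Finset.sum_congr rfl fun i _ => ?_
    rw [← hp, hQ, map_mul, eval_toMvPolynomial, eval_rename, mul_comm]
    rfl

theorem exists_totalDegree_le_of_forall_line {n m : ℕ} {f : (Fin n → K) → K}
    (hf : ∀ x y : Fin n → K, ∃ p : K[X], p.natDegree ≤ m ∧ ∀ t, f (x + t • y) = p.eval t) :
    ∃ P : MvPolynomial (Fin n) K, P.totalDegree ≤ m ∧ ∀ x, f x = eval x P := by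
  have hupdate (x : Fin n → K) (j : Fin n) (t : K) :
      Function.update x j 0 + t • Pi.single j 1 = Function.update x j t := by
    ext i
    rcases eq_or_ne i j with rfl | hij <;> simp [*]
  obtain ⟨P, hP⟩ := exists_eq_eval_of_forall_update fun x j => by
    simpa only [hupdate] using hf (Function.update x j 0) (Pi.single j 1)
  refine ⟨P, totalDegree_le_of_forall_eval_smul fun y => ?_, hP⟩
  simpa [hP] using hf 0 y

end MvPolynomial

theorem continuous_sum_ridge_polynomialFunctions_is_polynomial_general (n k : ℕ)
    (a : Fin k → (Fin n → ℝ))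
    (H : Fin k → (ℝ → ℝ)) (hH : ∀ i : Fin k, IsPolynomialFunction (k - 1) (H i))
    (hcont : Continuous (fun x : Fin n → ℝ => ∑ i : Fin k, H i (∑ j : Fin n, a i j * x j))) :
    ∃ P : MvPolynomial (Fin n) ℝ, P.totalDegree ≤ k - 1 ∧
      ∀ x : Fin n → ℝ,
        ∑ i : Fin k, H i (∑ j : Fin n, a i j * x j) = MvPolynomial.eval x P := by
  refine MvPolynomial.exists_totalDegree_le_of_forall_line fun x y => ?_
  have hridge : (fun t : ℝ => ∑ i, H i (∑ j, a i j * (x + t • y) j))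
      = ∑ i, fun t => H i (a i ⬝ᵥ x + t * a i ⬝ᵥ y) := by
    ext t
    simp only [Finset.sum_apply, dotProduct, Pi.add_apply, Pi.smul_apply, smul_eq_mul, mul_add,
      Finset.sum_add_distrib, Finset.mul_sum, mul_left_comm]
  obtain ⟨p, hpm, hp⟩ := IsPolynomialFunction.exists_polynomial_of_continuous
    (hridge ▸ IsPolynomialFunction.finsetSum _ fun i _ => (hH i).comp_affine _ _)
    (hcont.comp (continuous_const.add (continuous_id.smul continuous_const)))
  exact ⟨p, hpm, congr_fun hp⟩

/-- From the proof of Theorem 4.1: a continuous sum of ridge functions whose profiles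
are polynomial functions of order `k - 1` coincides with a polynomial of degree at most
`k - 1`. -/
theorem continuous_sum_ridge_polynomialFunctions_is_polynomial (n k : ℕ)
    (hn : 1 ≤ n) (hk : 1 ≤ k)
    (a : Fin k → (Fin n → ℝ))
    (H : Fin k → (ℝ → ℝ)) (hH : ∀ i : Fin k, IsPolynomialFunction (k - 1) (H i))
    (hcont : Continuous (fun x : Fin n → ℝ => ∑ i : Fin k, H i (∑ j : Fin n, a i j * x j))) :
    ∃ P : MvPolynomial (Fin n) ℝ, P.totalDegree ≤ k - 1 ∧
      ∀ x : Fin n → ℝ,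
        ∑ i : Fin k, H i (∑ j : Fin n, a i j * x j) = MvPolynomial.eval x P :=
  continuous_sum_ridge_polynomialFunctions_is_polynomial_general n k a H hH hcont
end
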